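/- Let X be a conjugacy class of involutions in the semidirect product G̃ = Z ⋊ W containing x = (a, u), and let X̂ be the conjugacy class of a in W. If the commuting involution graph C(W, X̂) is not connected, then the commuting involution graph C(G̃, X) is not connected. -/

import Mathlib

namespace AddAut

variable (A : Type*) [Add A]

/-- The group structure on `AddAut A` (composition), as in the older Mathlib. -/
instance group : Group (AddAut A) where
  mul g h := AddEquiv.trans h g
  one := AddEquiv.refl _
  inv := AddEquiv.symm
  mul_assoc _ _ _ := rfl
  one_mul _ := rfl
  mul_one _ := rfl
  inv_mul_cancel := AddEquiv.self_trans_symm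

variable {A}

@[simp]
theorem group_mul_apply (e₁ e₂ : AddAut A) (m : A) : (e₁ * e₂) m = e₁ (e₂ m) :=
  rfl

@[simp]
theorem group_one_apply (m : A) : (1 : AddAut A) m = m :=
  rfl

end AddAut

/-- The semidirect product `Z ⋊ W`, where the group `W` acts on the right on the additive
abelian group `Z` by additive automorphisms (the right action is encoded as a homomorphism
from the multiplicative opposite of `W`).  Elements are pairs `(a, u)` with `a ∈ W`, `u ∈ Z`,
and multiplication is given by `(a, u) * (b, v) = (a * b, u ^ b + v)`, where `u ^ b` denotes
the action of `b` on `u`. -/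
@[ext]
structure SDP {W Z : Type*} [Group W] [AddCommGroup Z] (φ : Wᵐᵒᵖ →* AddAut Z) where
  /-- the `W`-component -/
  w : W
  /-- the `Z`-component -/
  z : Z

namespace SDP

variable {W Z : Type*} [Group W] [AddCommGroup Z] {φ : Wᵐᵒᵖ →* AddAut Z}

instance : Mul (SDP φ) := ⟨fun x y => ⟨x.w * y.w, φ (MulOpposite.op y.w) x.z + y.z⟩⟩
instance : One (SDP φ) := ⟨⟨1, 0⟩⟩
instance : Inv (SDP φ) := ⟨fun x => ⟨x.w⁻¹, -(φ (MulOpposite.op x.w⁻¹) x.z)⟩⟩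

@[simp] theorem mul_w (x y : SDP φ) : (x * y).w = x.w * y.w := rfl
@[simp] theorem mul_z (x y : SDP φ) : (x * y).z = φ (MulOpposite.op y.w) x.z + y.z := rfl
@[simp] theorem one_w : (1 : SDP φ).w = 1 := rfl
@[simp] theorem one_z : (1 : SDP φ).z = 0 := rfl
@[simp] theorem inv_w (x : SDP φ) : x⁻¹.w = x.w⁻¹ := rfl
@[simp] theorem inv_z (x : SDP φ) : x⁻¹.z = -(φ (MulOpposite.op x.w⁻¹) x.z) := rfl

instance : Group (SDP φ) where
  mul_assoc x y z := by
    ext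
    · simp [mul_assoc]
    · simp only [mul_z, mul_w, map_add]
      rw [← AddAut.group_mul_apply, ← map_mul, ← MulOpposite.op_mul, add_assoc]
  one_mul x := by ext <;> simp
  mul_one x := by ext <;> simp
  inv_mul_cancel x := by
    ext
    · simp
    · simp only [mul_z, inv_w, inv_z, mul_w, inv_mul_cancel, one_z, map_neg]
      rw [← AddAut.group_mul_apply, ← map_mul, ← MulOpposite.op_mul]
      simp

end SDP

/-- The commuting involution graph on a set `X` of elements of a group `G`: the vertices are
the elements of `X`, and two distinct vertices are adjacent iff they commute in `G`. -/
def commGraph (G : Type*) [Group G] (X : Set G) : SimpleGraph X where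
  Adj x y := (x : G) ≠ (y : G) ∧ (x : G) * y = (y : G) * x
  symm := ⟨fun x y h => ⟨h.1.symm, h.2.symm⟩⟩
  loopless := ⟨fun x h => h.1 rfl⟩


/-! The projection `(a, u) ↦ a` is a surjective homomorphism carrying the class `X` onto `X̂`.
A homomorphism sends commuting elements to elements that commute or coincide, so every path in
`C(G̃, X)` projects to a path in `C(W, X̂)`; hence connectedness of `C(G̃, X)` would force that
of `C(W, X̂)`. -/

open SimpleGraph

theorem commGraph_reachable_of_commute {G : Type*} [Group G] {X : Set G} {a b : X}
    (h : Commute (a : G) b) : (commGraph G X).Reachable a b := by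
  by_cases hab : (a : G) = b
  · rw [Subtype.ext hab]
  · exact Adj.reachable ⟨hab, h⟩

theorem commGraph_reachable_map {G H : Type*} [Group G] [Group H] (f : G →* H)
    {X : Set G} {Y : Set H} (hf : Set.MapsTo f X Y) {a b : X}
    (hab : (commGraph G X).Reachable a b) :
    (commGraph H Y).Reachable ⟨f a, hf a.2⟩ ⟨f b, hf b.2⟩ := by
  rw [reachable_iff_reflTransGen] at hab ⊢
  refine Relation.ReflTransGen.lift' (fun c : X => (⟨f c, hf c.2⟩ : Y))
    (fun c d hcd => ?_) _ _ hab
  exact (reachable_iff_reflTransGen _ _).mp <|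
    commGraph_reachable_of_commute (Commute.map hcd.2 f)

theorem commGraph_connected_of_surjOn {G H : Type*} [Group G] [Group H] (f : G →* H)
    {X : Set G} {Y : Set H} (hf : Set.MapsTo f X Y) (hsurj : Set.SurjOn f X Y)
    (hX : (commGraph G X).Connected) : (commGraph H Y).Connected := by
  refine (connected_iff _).mpr ⟨?_, ?_⟩
  · rintro ⟨c, hc⟩ ⟨d, hd⟩
    obtain ⟨a, ha, rfl⟩ := hsurj hc
    obtain ⟨b, hb, rfl⟩ := hsurj hd
    exact commGraph_reachable_map f hf (hX.preconnected ⟨a, ha⟩ ⟨b, hb⟩)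
  · obtain ⟨a⟩ := hX.nonempty
    exact ⟨⟨f a, hf a.2⟩⟩

theorem MonoidHom.surjOn_conjugatesOf {G H : Type*} [Group G] [Group H] (f : G →* H)
    (hf : Function.Surjective f) (a : G) :
    Set.SurjOn f (conjugatesOf a) (conjugatesOf (f a)) := by
  intro c hc
  obtain ⟨g, rfl⟩ := isConj_iff.mp hc
  obtain ⟨h, rfl⟩ := hf g
  exact ⟨h * a * h⁻¹, isConj_iff.mpr ⟨h, rfl⟩, by simp⟩

namespace SDP

variable {W Z : Type*} [Group W] [AddCommGroup Z] (φ : Wᵐᵒᵖ →* AddAut Z)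

def projW : SDP φ →* W where
  toFun := SDP.w
  map_one' := rfl
  map_mul' _ _ := rfl

theorem projW_surjective : Function.Surjective (projW φ) :=
  fun a => ⟨⟨a, 0⟩, rfl⟩

end SDP

theorem stmt1_general {W Z : Type*} [Group W] [AddCommGroup Z] (φ : Wᵐᵒᵖ →* AddAut Z)
    (x : SDP φ)
    (X : Set (SDP φ)) (hX : X = {y | IsConj x y})
    (Xhat : Set W) (hXhat : Xhat = {c | IsConj x.w c})
    (hdisc : ¬ (commGraph W Xhat).Connected) :
    ¬ (commGraph (SDP φ) X).Connected := by
  subst hX hXhat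
  exact fun hconn => hdisc <| commGraph_connected_of_surjOn (SDP.projW φ)
    (fun _ hy => (SDP.projW φ).map_isConj hy)
    ((SDP.projW φ).surjOn_conjugatesOf (SDP.projW_surjective φ) x) hconn

/-- Let X be a conjugacy class of involutions in the semidirect product
G-tilde = Z ⋊ W containing x = (a, u), and let X-hat be the conjugacy class of a in W.
If the commuting involution graph C(W, X-hat) is not connected, then the commuting
involution graph C(G-tilde, X) is not connected. -/
theorem stmt1 {W Z : Type*} [Group W] [AddCommGroup Z] (φ : Wᵐᵒᵖ →* AddAut Z)
    (x : SDP φ) (hx : orderOf x = 2)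
    (X : Set (SDP φ)) (hX : X = {y | IsConj x y})
    (Xhat : Set W) (hXhat : Xhat = {c | IsConj x.w c})
    (hdisc : ¬ (commGraph W Xhat).Connected) :
    ¬ (commGraph (SDP φ) X).Connected :=
  stmt1_general φ x X hX Xhat hXhat hdisc
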